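/- arXiv:1501.01741 — 2 statements merged into one kernel-verified Lean document; each statement's English description precedes it below -/
import Mathlib

section
/- Let G be a finite simple undirected graph on n vertices and let 2 ≤ k ≤ n. For every partition 𝒮 = {S_1,…,S_k} of V(G) into k parts each of positive volume, h_G^{(k)}(𝒮) ≥ (1/(2k)) Σ_{i=0}^{k-1} λ_i. Consequently, the k-fold Cheeger constant satisfies h_G^{(k)} ≥ (1/(2k)) Σ_{i=0}^{k-1} λ_i (equivalently, h_G^{(k)} ≥ (k-1)/(2k) − Λ/2, where Λ = (1/k) Σ_{i=1}^{k-1} (1 − λ_i)). -/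
open Matrix Finset

/-- The degree-based volume of a vertex subset: the sum of the degrees of its vertices. -/
def gvol {n : ℕ} (G : SimpleGraph (Fin n)) [DecidableRel G.Adj] (S : Finset (Fin n)) : ℕ :=
  ∑ v ∈ S, G.degree v

/-- `eCount G S T` is the number of ordered pairs `(u, v)` with `u ∈ S`, `v ∈ T`, `u ~ v`. -/
def eCount {n : ℕ} (G : SimpleGraph (Fin n)) [DecidableRel G.Adj] (S T : Finset (Fin n)) : ℕ :=
  ∑ u ∈ S, ∑ v ∈ T, if G.Adj u v then 1 else 0

/-- The normalized Laplacian `D^{-1/2} (D - A) D^{-1/2}`, with the convention that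
`(D^{-1/2})_{uu} = 0` for isolated vertices `u`. -/
noncomputable def normLap {n : ℕ} (G : SimpleGraph (Fin n)) [DecidableRel G.Adj] :
    Matrix (Fin n) (Fin n) ℝ :=
  Matrix.diagonal (fun v => (Real.sqrt (G.degree v))⁻¹) * G.lapMatrix ℝ *
    Matrix.diagonal (fun v => (Real.sqrt (G.degree v))⁻¹)

/-- A partition of the vertex set into `k` parts, each of positive volume. -/
def IsVolPartition {n k : ℕ} (G : SimpleGraph (Fin n)) [DecidableRel G.Adj]
    (P : Fin k → Finset (Fin n)) : Prop :=
  (∀ i j, i ≠ j → Disjoint (P i) (P j)) ∧ (∀ v, ∃ i, v ∈ P i) ∧ (∀ i, 0 < gvol G (P i))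

/-- The `k`-fold Cheeger ratio of a partition:
`h_G^{(k)}(𝒮) = (1/k) ∑_{i<j} e(S_i,S_j) / min(vol S_i, vol S_j)`. -/
noncomputable def cheegerVal {n k : ℕ} (G : SimpleGraph (Fin n)) [DecidableRel G.Adj]
    (P : Fin k → Finset (Fin n)) : ℝ :=
  (1 / (k : ℝ)) * ∑ i : Fin k, ∑ j : Fin k,
    if i < j then (eCount G (P i) (P j) : ℝ) / min (gvol G (P i) : ℝ) (gvol G (P j) : ℝ)
    else 0

/-- The `k`-fold Cheeger constant: the infimum of `cheegerVal` over all partitions of the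
vertices into `k` parts of positive volume. -/
noncomputable def cheegerConst (n k : ℕ) (G : SimpleGraph (Fin n)) [DecidableRel G.Adj] : ℝ :=
  sInf { x : ℝ | ∃ P : Fin k → Finset (Fin n), IsVolPartition G P ∧ x = cheegerVal G P }

/-!
Normalize the vectors `D^{1/2} 𝟙_{S_i}` to unit length. Since the parts are disjoint they are
orthonormal, and the Rayleigh quotient of the normalized Laplacian at the `i`-th one is
`e(S_i, S_iᶜ) / vol S_i`. By Ky Fan's principle the sum of these `k` quotients is at least
`λ_0 + ⋯ + λ_{k-1}`. Splitting `e(S_i, S_iᶜ) = ∑_{j ≠ i} e(S_i, S_j)` and shrinking `vol S_i` to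
`min (vol S_i) (vol S_j)` bounds the sum by `2k h_G^{(k)}(𝒮)`. The bound for the constant
follows by taking the infimum.
-/

theorem Finset.sum_le_sum_mul_of_forall_le_of_sum_eq_card {ι : Type*} [Fintype ι]
    [DecidableEq ι] {T : Finset ι} {lam c : ι → ℝ} (hT : ∀ j ∈ T, ∀ j' ∉ T, lam j ≤ lam j')
    (hc0 : ∀ j, 0 ≤ c j) (hc1 : ∀ j, c j ≤ 1) (hc : ∑ j, c j = #T) :
    ∑ j ∈ T, lam j ≤ ∑ j, lam j * c j := by
  rcases T.eq_empty_or_nonempty with rfl | hne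
  · have hc_zero : ∀ j, c j = 0 := by
      simpa [Finset.sum_eq_zero_iff_of_nonneg fun j _ => hc0 j] using hc
    simp [hc_zero]
  set t := T.sup' hne lam
  set a : ι → ℝ := fun j => if j ∈ T then 1 else 0
  have key : ∀ j, 0 ≤ (lam j - t) * (c j - a j) := by
    intro j
    by_cases hj : j ∈ T
    · have : lam j ≤ t := le_sup' lam hj
      simp only [a, if_pos hj]
      exact mul_nonneg_of_nonpos_of_nonpos (by linarith) (by linarith [hc1 j])
    · have : t ≤ lam j := sup'_le hne lam fun i hi => hT i hi j hj
      simp only [a, if_neg hj, sub_zero]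
      exact mul_nonneg (by linarith) (hc0 j)
  calc ∑ j ∈ T, lam j
      = ∑ j, lam j * c j - ∑ j, (lam j - t) * (c j - a j) := by
        simp only [sub_mul, mul_sub, sum_sub_distrib, ← mul_sum, hc, mul_boole, a,
          sum_ite_mem, univ_inter, sum_const, nsmul_eq_mul]
        ring
    _ ≤ ∑ j, lam j * c j := sub_le_self _ (sum_nonneg fun j _ => key j)

theorem Monotone.sum_castLE_le_sum_mul {n k : ℕ} (hkn : k ≤ n) {lam c : Fin n → ℝ}
    (hmono : Monotone lam) (hc0 : ∀ j, 0 ≤ c j) (hc1 : ∀ j, c j ≤ 1) (hc : ∑ j, c j = k) :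
    ∑ i : Fin k, lam (Fin.castLE hkn i) ≤ ∑ j, lam j * c j := by
  refine (sum_map univ (Fin.castLEEmb hkn) lam).symm.trans_le
    (sum_le_sum_mul_of_forall_le_of_sum_eq_card ?_ hc0 hc1 (by simpa using hc))
  simp only [mem_map, mem_univ, true_and, Fin.castLEEmb_apply, not_exists]
  rintro _ ⟨i, rfl⟩ j hj
  have hkj : k ≤ (j : ℕ) := not_lt.mp fun h => hj ⟨j, h⟩ rfl
  exact hmono (Fin.le_def.mpr (by simp only [Fin.val_castLE]; omega))

theorem Finset.compl_eq_biUnion_erase {α ι : Type*} [Fintype α] [DecidableEq α] [Fintype ι]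
    [DecidableEq ι] {P : ι → Finset α} (hdisj : Pairwise fun i j => Disjoint (P i) (P j))
    (hcov : ∀ v, ∃ i, v ∈ P i) (i : ι) :
    (P i)ᶜ = (univ.erase i).biUnion P := by
  ext v
  simp only [mem_compl, mem_biUnion, mem_erase, mem_univ, and_true]
  constructor
  · intro hv
    obtain ⟨j, hj⟩ := hcov v
    exact ⟨j, fun hji => hv (hji ▸ hj), hj⟩
  · rintro ⟨j, hji, hj⟩ hi
    exact disjoint_left.mp (hdisj hji) hj hi

theorem sum_sum_erase_eq_two_mul_sum_ite_lt {ι : Type*} [Fintype ι] [LinearOrder ι]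
    (f : ι → ι → ℝ) (hf : ∀ i j, f i j = f j i) :
    ∑ i, ∑ j ∈ univ.erase i, f i j = 2 * ∑ i, ∑ j, if i < j then f i j else 0 := by
  have hsplit : ∀ i, ∑ j ∈ univ.erase i, f i j =
      ∑ j, ((if i < j then f i j else 0) + if j < i then f i j else 0) := by
    intro i
    rw [← filter_ne' univ i, sum_filter]
    refine sum_congr rfl fun j _ => ?_
    rcases lt_trichotomy i j with h | rfl | h
    · simp [h, h.ne', h.not_gt]
    · simp
    · simp [h, h.ne, h.not_gt]
  have hswap : ∑ i, ∑ j, (if j < i then f i j else 0) = ∑ i, ∑ j, if i < j then f i j else 0 := by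
    rw [sum_comm]
    exact sum_congr rfl fun i _ => sum_congr rfl fun j _ => by rw [hf]
  simp only [hsplit, sum_add_distrib, hswap]
  ring

theorem Matrix.IsHermitian.dotProduct_mulVec_eq_sum_eigenvalues {ι : Type*} [Fintype ι]
    [DecidableEq ι] {L : Matrix ι ι ℝ} (hL : L.IsHermitian) (y : ι → ℝ) :
    y ⬝ᵥ (L *ᵥ y) = ∑ j, hL.eigenvalues j * (y ⬝ᵥ ⇑(hL.eigenvectorBasis j)) ^ 2 := by
  have hy : y = ∑ j, (y ⬝ᵥ ⇑(hL.eigenvectorBasis j)) • ⇑(hL.eigenvectorBasis j) := by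
    simpa [EuclideanSpace.inner_eq_star_dotProduct, dotProduct_comm] using
      (congrArg WithLp.ofLp (hL.eigenvectorBasis.sum_repr' (WithLp.toLp 2 y))).symm
  nth_rw 2 [hy]
  simp only [mulVec_sum, mulVec_smul, hL.mulVec_eigenvectorBasis, dotProduct_sum,
    dotProduct_smul, smul_eq_mul]
  exact sum_congr rfl fun j _ => by ring

/-- Ky Fan's principle. In the eigenbasis `b`, the weights `c j = ∑ i, ⟪y i, b j⟫ ^ 2` lie in
`[0, 1]` by Bessel's inequality and sum to `k` by Parseval. -/
theorem Matrix.IsHermitian.sum_castLE_le_sum_dotProduct_mulVec {n k : ℕ} (hkn : k ≤ n)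
    {L : Matrix (Fin n) (Fin n) ℝ} (hL : L.IsHermitian) {lam : Fin n → ℝ}
    (hmono : Monotone lam) (hperm : ∃ σ : Equiv.Perm (Fin n), lam = hL.eigenvalues ∘ σ)
    {y : Fin k → Fin n → ℝ} (hy : Orthonormal ℝ fun i => WithLp.toLp 2 (y i)) :
    ∑ i : Fin k, lam (Fin.castLE hkn i) ≤ ∑ i, y i ⬝ᵥ (L *ᵥ y i) := by
  obtain ⟨σ, rfl⟩ := hperm
  let c : Fin n → ℝ := fun j => ∑ i, (y i ⬝ᵥ ⇑(hL.eigenvectorBasis j)) ^ 2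
  have hc0 : ∀ j, 0 ≤ c j := fun j => sum_nonneg fun i _ => sq_nonneg _
  have hc1 : ∀ j, c j ≤ 1 := by
    intro j
    simpa [EuclideanSpace.inner_eq_star_dotProduct, dotProduct_comm] using
      hy.sum_inner_products_le (s := univ) (hL.eigenvectorBasis j)
  have hc : ∑ j, c j = k := by
    rw [sum_comm]
    trans ∑ i : Fin k, ‖WithLp.toLp 2 (y i)‖ ^ 2
    · refine sum_congr rfl fun i _ => ?_
      simpa [EuclideanSpace.inner_eq_star_dotProduct, dotProduct_comm] using
        hL.eigenvectorBasis.sum_sq_norm_inner_right (WithLp.toLp 2 (y i))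
    · simp [hy.1]
  calc ∑ i, (hL.eigenvalues ∘ σ) (Fin.castLE hkn i)
      ≤ ∑ j, hL.eigenvalues (σ j) * c (σ j) :=
        hmono.sum_castLE_le_sum_mul hkn (fun _ => hc0 _) (fun _ => hc1 _)
          (by rw [Equiv.sum_comp σ c, hc])
    _ = ∑ j, hL.eigenvalues j * c j := Equiv.sum_comp σ fun j => hL.eigenvalues j * c j
    _ = ∑ i, y i ⬝ᵥ (L *ᵥ y i) := by
      simp only [c, mul_sum, hL.dotProduct_mulVec_eq_sum_eigenvalues]
      exact sum_comm

theorem SimpleGraph.dotProduct_lapMatrix_mulVec_congr {V : Type*} [Fintype V] [DecidableEq V]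
    (G : SimpleGraph V) [DecidableRel G.Adj] {f g : V → ℝ}
    (hfg : ∀ v, G.degree v ≠ 0 → f v = g v) :
    f ⬝ᵥ (G.lapMatrix ℝ *ᵥ f) = g ⬝ᵥ (G.lapMatrix ℝ *ᵥ g) := by
  simp only [← toLinearMap₂'_apply', SimpleGraph.lapMatrix_toLinearMap₂']
  congr 1
  refine sum_congr rfl fun u _ => sum_congr rfl fun v _ => ?_
  split_ifs with huv
  · rw [hfg u (G.degree_pos_iff_exists_adj u |>.mpr ⟨v, huv⟩).ne',
      hfg v (G.degree_pos_iff_exists_adj v |>.mpr ⟨u, huv.symm⟩).ne']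
  · rfl

section Graph

variable {n : ℕ} (G : SimpleGraph (Fin n)) [DecidableRel G.Adj]

theorem eCount_comm (S T : Finset (Fin n)) : eCount G S T = eCount G T S := by
  rw [eCount, eCount, sum_comm]
  simp only [G.adj_comm]

theorem cast_eCount_eq_sum (S T : Finset (Fin n)) :
    (eCount G S T : ℝ) =
      ∑ u, ∑ v, if G.Adj u v then (if u ∈ S then 1 else 0) * (if v ∈ T then 1 else 0) else 0 := by
  simp only [eCount, Nat.cast_sum, Nat.cast_ite, Nat.cast_one, Nat.cast_zero]
  rw [← sum_ite_mem_eq]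
  refine sum_congr rfl fun u _ => ?_
  by_cases hu : u ∈ S
  · rw [if_pos hu, ← sum_ite_mem_eq]
    refine sum_congr rfl fun v _ => ?_
    by_cases hv : v ∈ T <;> simp [hu, hv]
  · simp [hu]

theorem dotProduct_lapMatrix_mulVec_indicator (S : Finset (Fin n)) :
    (fun v => if v ∈ S then (1 : ℝ) else 0) ⬝ᵥ
      (G.lapMatrix ℝ *ᵥ fun v => if v ∈ S then 1 else 0) = eCount G S Sᶜ := by
  rw [← toLinearMap₂'_apply', SimpleGraph.lapMatrix_toLinearMap₂']
  have hterm : ∀ u v : Fin n,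
      (if G.Adj u v then ((if u ∈ S then (1 : ℝ) else 0) - if v ∈ S then 1 else 0) ^ 2 else 0) =
        (if G.Adj u v then (if u ∈ S then 1 else 0) * (if v ∈ Sᶜ then 1 else 0) else 0) +
          if G.Adj u v then (if u ∈ Sᶜ then 1 else 0) * (if v ∈ S then 1 else 0) else 0 := by
    intro u v
    by_cases hu : u ∈ S <;> by_cases hv : v ∈ S <;> simp [hu, hv]
  simp only [hterm, sum_add_distrib, ← cast_eCount_eq_sum, eCount_comm G Sᶜ S]
  ring

/-- The vector `D^{1/2} 𝟙_S`. -/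
noncomputable def sqrtDegIndicator (S : Finset (Fin n)) : Fin n → ℝ :=
  fun v => if v ∈ S then √(G.degree v) else 0

theorem sqrtDegIndicator_dotProduct (S T : Finset (Fin n)) :
    sqrtDegIndicator G S ⬝ᵥ sqrtDegIndicator G T = gvol G (S ∩ T) := by
  simp only [dotProduct, sqrtDegIndicator, gvol, Nat.cast_sum, ← sum_ite_mem_eq (S ∩ T)]
  refine sum_congr rfl fun v _ => ?_
  by_cases hS : v ∈ S <;> by_cases hT : v ∈ T <;> simp [hS, hT]

theorem sqrtDegIndicator_dotProduct_normLap_mulVec (S : Finset (Fin n)) :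
    sqrtDegIndicator G S ⬝ᵥ (normLap G *ᵥ sqrtDegIndicator G S) = eCount G S Sᶜ := by
  -- `D^{-1/2} D^{1/2} 𝟙_S` is `𝟙_S` only off the isolated vertices, which the Laplacian ignores.
  have hind : ∀ v, G.degree v ≠ 0 →
      (diagonal (fun v => (√(G.degree v))⁻¹) *ᵥ sqrtDegIndicator G S) v =
        if v ∈ S then 1 else 0 := by
    intro v hv
    have : √(G.degree v : ℝ) ≠ 0 := by positivity
    by_cases hS : v ∈ S <;> simp [mulVec_diagonal, sqrtDegIndicator, hS, this]
  rw [normLap, ← mulVec_mulVec, ← mulVec_mulVec, dotProduct_mulVec,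
    ← mulVec_transpose, diagonal_transpose, G.dotProduct_lapMatrix_mulVec_congr hind,
    dotProduct_lapMatrix_mulVec_indicator]

theorem eCount_biUnion {ι : Type*} (S : Finset (Fin n)) {s : Finset ι} {t : ι → Finset (Fin n)}
    (ht : (s : Set ι).PairwiseDisjoint t) :
    eCount G S (s.biUnion t) = ∑ i ∈ s, eCount G S (t i) := by
  simp only [eCount, sum_biUnion ht]
  exact sum_comm

variable {G} {k : ℕ} {P : Fin k → Finset (Fin n)}

theorem IsVolPartition.sum_eCount_compl_div_gvol_le (hP : IsVolPartition G P) :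
    ∑ i, (eCount G (P i) (P i)ᶜ : ℝ) / gvol G (P i) ≤
      2 * ∑ i, ∑ j, if i < j then
        (eCount G (P i) (P j) : ℝ) / min (gvol G (P i) : ℝ) (gvol G (P j) : ℝ) else 0 := by
  have hvol : ∀ i, (0 : ℝ) < gvol G (P i) := fun i => mod_cast hP.2.2 i
  calc ∑ i, (eCount G (P i) (P i)ᶜ : ℝ) / gvol G (P i)
      = ∑ i, ∑ j ∈ univ.erase i, (eCount G (P i) (P j) : ℝ) / gvol G (P i) := by
        refine sum_congr rfl fun i _ => ?_
        rw [compl_eq_biUnion_erase hP.1 hP.2.1, eCount_biUnion G _ fun a _ b _ hab => hP.1 a b hab,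
          Nat.cast_sum, sum_div]
    _ ≤ ∑ i, ∑ j ∈ univ.erase i,
          (eCount G (P i) (P j) : ℝ) / min (gvol G (P i) : ℝ) (gvol G (P j) : ℝ) := by
        gcongr with i _ j
        · exact lt_min (hvol i) (hvol j)
        · exact min_le_left _ _
    _ = _ := sum_sum_erase_eq_two_mul_sum_ite_lt _ fun i j => by rw [eCount_comm, min_comm]

theorem IsVolPartition.orthonormal_sqrtDegIndicator (hP : IsVolPartition G P) :
    Orthonormal ℝ fun i =>
      WithLp.toLp 2 ((√(gvol G (P i) : ℝ))⁻¹ • sqrtDegIndicator G (P i)) := by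
  rw [orthonormal_iff_ite]
  intro i j
  rw [EuclideanSpace.inner_toLp_toLp, star_trivial, smul_dotProduct, dotProduct_smul,
    sqrtDegIndicator_dotProduct, smul_eq_mul, smul_eq_mul]
  split_ifs with hij
  · subst hij
    have hvol : (0 : ℝ) < gvol G (P i) := mod_cast hP.2.2 i
    rw [inter_self]
    field_simp
    rw [Real.sq_sqrt hvol.le]
  · simp [disjoint_iff_inter_eq_empty.mp (hP.1 j i (Ne.symm hij)), gvol]

theorem IsVolPartition.le_cheegerVal (hP : IsVolPartition G P) (hkn : k ≤ n)
    (hL : (normLap G).IsHermitian) {lam : Fin n → ℝ} (hmono : Monotone lam)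
    (hperm : ∃ σ : Equiv.Perm (Fin n), lam = hL.eigenvalues ∘ σ) :
    (1 / (2 * (k : ℝ))) * ∑ i : Fin k, lam (Fin.castLE hkn i) ≤ cheegerVal G P := by
  set y : Fin k → Fin n → ℝ := fun i => (√(gvol G (P i) : ℝ))⁻¹ • sqrtDegIndicator G (P i)
  have hray : ∀ i, y i ⬝ᵥ (normLap G *ᵥ y i) = (eCount G (P i) (P i)ᶜ : ℝ) / gvol G (P i) := by
    intro i
    have hvol : (0 : ℝ) < gvol G (P i) := mod_cast hP.2.2 i
    rw [mulVec_smul, smul_dotProduct, dotProduct_smul, sqrtDegIndicator_dotProduct_normLap_mulVec,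
      smul_eq_mul, smul_eq_mul, ← mul_assoc, ← mul_inv, Real.mul_self_sqrt hvol.le, inv_mul_eq_div]
  calc (1 / (2 * (k : ℝ))) * ∑ i : Fin k, lam (Fin.castLE hkn i)
      ≤ (1 / (2 * (k : ℝ))) * ∑ i, y i ⬝ᵥ (normLap G *ᵥ y i) :=
        mul_le_mul_of_nonneg_left (hL.sum_castLE_le_sum_dotProduct_mulVec hkn hmono hperm
          hP.orthonormal_sqrtDegIndicator) (by positivity)
    _ = (1 / (2 * (k : ℝ))) * ∑ i, (eCount G (P i) (P i)ᶜ : ℝ) / gvol G (P i) := by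
        simp only [hray]
    _ ≤ (1 / (2 * (k : ℝ))) * (2 * ∑ i : Fin k, ∑ j : Fin k, if i < j then
          (eCount G (P i) (P j) : ℝ) / min (gvol G (P i) : ℝ) (gvol G (P j) : ℝ) else 0) := by
        gcongr
        exact hP.sum_eCount_compl_div_gvol_le
    _ = cheegerVal G P := by
      rw [cheegerVal]
      ring

end Graph

/-- Lower bound for the `k`-fold Cheeger constant: every `k`-part partition of positive
volumes has Cheeger ratio at least `(1/(2k)) ∑_{i=0}^{k-1} λ_i`, and consequently so does
the `k`-fold Cheeger constant. -/
theorem kfold_cheeger_lower_bound {n k : ℕ} (hkn : k ≤ n)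
    (G : SimpleGraph (Fin n)) [DecidableRel G.Adj]
    (hL : (normLap G).IsHermitian)
    (lam : Fin n → ℝ) (hmono : Monotone lam)
    (hperm : ∃ σ : Equiv.Perm (Fin n), lam = hL.eigenvalues ∘ σ) :
    (∀ P : Fin k → Finset (Fin n), IsVolPartition G P →
      (1 / (2 * (k : ℝ))) * ∑ i : Fin k, lam (Fin.castLE hkn i) ≤ cheegerVal G P) ∧
    ((∃ P : Fin k → Finset (Fin n), IsVolPartition G P) →
      (1 / (2 * (k : ℝ))) * ∑ i : Fin k, lam (Fin.castLE hkn i) ≤ cheegerConst n k G) := by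
  have hbound := fun P (hP : IsVolPartition G P) => hP.le_cheegerVal hkn hL hmono hperm
  refine ⟨hbound, fun ⟨P, hP⟩ => le_csInf ⟨cheegerVal G P, P, hP, rfl⟩ ?_⟩
  rintro _ ⟨Q, hQ, rfl⟩
  exact hbound Q hQ
end

section
/- Let n ≥ 2 and let k ≥ 2 divide n. Then the k-fold Cheeger constant of the complete graph K_n equals exactly h_{K_n}^{(k)} = (k−1)n / (2k(n−1)), and it is attained by any partition of the vertices into k parts each of size n/k. -/
open Matrix Finset

/-! In `K_n` a part `S` has volume `|S|(n-1)` and disjoint parts `S, T` span `|S||T|` edges, so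
the pair contributes `max(|S|,|T|)/(n-1) ≥ (|S|+|T|)/(2(n-1))`, with equality when `|S| = |T|`.
Each part lies in `k-1` of the pairs and the sizes add up to `n`, which gives the lower bound
`(k-1)n/(2k(n-1))`, attained by every partition into equal parts. -/

section PairSums

variable {ι R : Type*} [Fintype ι] [LinearOrder ι]

theorem sum_sum_ite_lt_add [CommRing R] (f : ι → R) :
    ∑ i, ∑ j, (if i < j then f i + f j else 0) = ((Fintype.card ι : R) - 1) * ∑ i, f i := by
  have hswap : ∑ i, ∑ j, (if i < j then f j else 0) = ∑ i, ∑ j, (if j < i then f i else 0) :=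
    Finset.sum_comm
  have hrow (i : ι) : ∑ j, ((if i < j then f i else 0) + if j < i then f i else 0)
      = ((Fintype.card ι : R) - 1) * f i := by
    have hcard : (#(univ.erase i) : R) = (Fintype.card ι : R) - 1 := by
      rw [card_erase_of_mem (mem_univ i), card_univ, Nat.cast_sub (Fintype.card_pos_iff.mpr ⟨i⟩)]
      simp
    rw [← hcard, ← nsmul_eq_mul, ← sum_const, ← filter_ne', sum_filter]
    refine sum_congr rfl fun j _ => ?_
    rcases lt_trichotomy i j with h | rfl | h
    · simp [h, h.ne', h.not_gt]
    · simp
    · simp [h, h.ne, h.not_gt]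
  simp only [ite_add_zero, sum_add_distrib]
  rw [hswap, ← sum_add_distrib, mul_sum]
  exact sum_congr rfl fun i _ => by rw [← hrow, sum_add_distrib]

theorem sum_sum_ite_lt_add_div_two [Field R] (f : ι → R) :
    ∑ i, ∑ j, (if i < j then (f i + f j) / 2 else 0)
      = ((Fintype.card ι : R) - 1) / 2 * ∑ i, f i := by
  simp only [div_eq_mul_inv, ← ite_zero_mul, ← sum_mul, sum_sum_ite_lt_add]
  ring

theorem le_sum_sum_ite_lt_max [Field R] [LinearOrder R] [IsStrictOrderedRing R] (f : ι → R) :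
    ((Fintype.card ι : R) - 1) / 2 * ∑ i, f i
      ≤ ∑ i, ∑ j, (if i < j then max (f i) (f j) else 0) := by
  rw [← sum_sum_ite_lt_add_div_two]
  refine sum_le_sum fun i _ => sum_le_sum fun j _ => ?_
  split_ifs
  · linarith [le_max_left (f i) (f j), le_max_right (f i) (f j)]
  · rfl

end PairSums

theorem mul_div_min_mul_eq_max_div {R : Type*} [Field R] [LinearOrder R] [IsStrictOrderedRing R]
    {x y d : R} (hx : 0 < x) (hy : 0 < y) (hd : 0 ≤ d) :
    x * y / min (x * d) (y * d) = max (x / d) (y / d) := by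
  rw [← min_mul_of_nonneg _ _ hd, max_div_div_right hd, ← min_mul_max x y,
    mul_div_mul_left _ _ (lt_min hx hy).ne']

theorem sum_card_eq_of_partition {n k : ℕ} {P : Fin k → Finset (Fin n)}
    (hdisj : ∀ i j, i ≠ j → Disjoint (P i) (P j)) (hcov : ∀ v, ∃ i, v ∈ P i) :
    ∑ i, #(P i) = n := by
  rw [← card_biUnion fun i _ j _ hij => hdisj i j hij, card_eq_of_equiv_fin]
  exact (Equiv.subtypeUnivEquiv fun v => by simpa using hcov v)

theorem exists_partition_card_eq {n k m : ℕ} (hm : k * m = n) :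
    ∃ P : Fin k → Finset (Fin n), (∀ i j, i ≠ j → Disjoint (P i) (P j)) ∧
      (∀ v, ∃ i, v ∈ P i) ∧ ∀ i, #(P i) = m := by
  obtain ⟨e⟩ : Nonempty (Fin k × Fin m ≃ Fin n) := ⟨finProdFinEquiv.trans (finCongr hm)⟩
  refine ⟨fun i => univ.map ⟨fun j => e (i, j), e.injective.comp (Prod.mk_right_injective i)⟩,
    fun i i' hii' => ?_, fun v => ⟨(e.symm v).1, ?_⟩, fun i => by simp⟩
  · simp only [disjoint_left, mem_map, mem_univ, true_and]
    rintro _ ⟨j, rfl⟩ ⟨j', h⟩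
    exact hii' (congrArg Prod.fst (e.injective h)).symm
  · simp only [mem_map, mem_univ, true_and]
    exact ⟨(e.symm v).2, by simp⟩

section CompleteGraph

variable {n k : ℕ}

theorem gvol_top (S : Finset (Fin n)) : gvol (⊤ : SimpleGraph (Fin n)) S = #S * (n - 1) := by
  simp [gvol, SimpleGraph.complete_graph_degree]

theorem gvol_top_pos_iff {S : Finset (Fin n)} :
    0 < gvol (⊤ : SimpleGraph (Fin n)) S ↔ S.Nonempty ∧ 1 < n := by
  rw [gvol_top, CanonicallyOrderedAdd.mul_pos, card_pos, Nat.sub_pos_iff_lt]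

theorem eCount_top_of_disjoint {S T : Finset (Fin n)} (h : Disjoint S T) :
    eCount (⊤ : SimpleGraph (Fin n)) S T = #S * #T := by
  rw [eCount, card_eq_sum_ones, sum_mul, one_mul]
  refine sum_congr rfl fun u hu => ?_
  rw [card_eq_sum_ones]
  refine sum_congr rfl fun v hv => if_pos ?_
  rintro rfl
  exact disjoint_left.mp h hu hv

theorem eCount_div_min_gvol_top {S T : Finset (Fin n)} (h : Disjoint S T) (hS : S.Nonempty)
    (hT : T.Nonempty) :
    (eCount (⊤ : SimpleGraph (Fin n)) S T : ℝ)
        / min (gvol (⊤ : SimpleGraph (Fin n)) S : ℝ) (gvol (⊤ : SimpleGraph (Fin n)) T)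
      = max ((#S : ℝ) / (n - 1)) (#T / (n - 1)) := by
  have hn : 0 < n := hS.choose.pos
  rw [eCount_top_of_disjoint h, gvol_top, gvol_top]
  push_cast [Nat.cast_sub hn]
  exact mul_div_min_mul_eq_max_div (by simpa using hS) (by simpa using hT)
    (sub_nonneg.mpr (by exact_mod_cast hn))

theorem cheegerVal_top {P : Fin k → Finset (Fin n)} (hdisj : ∀ i j, i ≠ j → Disjoint (P i) (P j))
    (hne : ∀ i, (P i).Nonempty) :
    cheegerVal (⊤ : SimpleGraph (Fin n)) P = 1 / (k : ℝ) * ∑ i, ∑ j,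
      if i < j then max ((#(P i) : ℝ) / (n - 1)) (#(P j) / (n - 1)) else 0 := by
  unfold cheegerVal
  congr 1
  refine sum_congr rfl fun i _ => sum_congr rfl fun j _ => ?_
  split_ifs with h
  · exact eCount_div_min_gvol_top (hdisj i j h.ne) (hne i) (hne j)
  · rfl

theorem le_cheegerVal_top {P : Fin k → Finset (Fin n)}
    (hP : IsVolPartition (⊤ : SimpleGraph (Fin n)) P) :
    ((k : ℝ) - 1) * n / (2 * k * ((n : ℝ) - 1)) ≤ cheegerVal (⊤ : SimpleGraph (Fin n)) P := by
  obtain ⟨hdisj, hcov, hpos⟩ := hP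
  have hsum : ∑ i, (#(P i) : ℝ) / (n - 1) = n / (n - 1) := by
    rw [← sum_div, ← Nat.cast_sum, sum_card_eq_of_partition hdisj hcov]
  rw [cheegerVal_top hdisj fun i => (gvol_top_pos_iff.mp (hpos i)).1]
  calc ((k : ℝ) - 1) * n / (2 * k * ((n : ℝ) - 1))
      = 1 / (k : ℝ) * (((k : ℝ) - 1) / 2 * ∑ i, (#(P i) : ℝ) / (n - 1)) := by
        rw [hsum]
        simp only [div_eq_mul_inv, mul_inv]
        ring
    _ ≤ _ := by
        gcongr
        simpa using le_sum_sum_ite_lt_max fun i => (#(P i) : ℝ) / (n - 1)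

theorem cheegerVal_top_of_card_eq {m : ℕ} {P : Fin k → Finset (Fin n)}
    (hdisj : ∀ i j, i ≠ j → Disjoint (P i) (P j)) (hcard : ∀ i, #(P i) = m) (hm : k * m = n)
    (hm0 : 0 < m) :
    cheegerVal (⊤ : SimpleGraph (Fin n)) P = ((k : ℝ) - 1) * n / (2 * k * ((n : ℝ) - 1)) := by
  have hconst := sum_sum_ite_lt_add_div_two fun _ : Fin k => (m : ℝ) / (n - 1)
  simp only [add_self_div_two, sum_const, card_univ, Fintype.card_fin, nsmul_eq_mul] at hconst
  rw [cheegerVal_top hdisj fun i => card_pos.mp (hcard i ▸ hm0)]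
  simp only [hcard, max_self]
  have hn : (n : ℝ) = k * m := by exact_mod_cast hm.symm
  rw [hconst]
  simp only [div_eq_mul_inv, mul_inv]
  linear_combination (1 - (k : ℝ)) * 2⁻¹ * (k : ℝ)⁻¹ * ((n : ℝ) - 1)⁻¹ * hn

end CompleteGraph

theorem cheegerConst_complete_general {n k : ℕ} (hn : 2 ≤ n) (hdvd : k ∣ n) :
    cheegerConst n k (⊤ : SimpleGraph (Fin n))
        = ((k : ℝ) - 1) * n / (2 * k * ((n : ℝ) - 1)) ∧
    ∀ P : Fin k → Finset (Fin n),
      (∀ i j, i ≠ j → Disjoint (P i) (P j)) →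
      (∀ v, ∃ i, v ∈ P i) →
      (∀ i, (P i).card = n / k) →
      cheegerVal (⊤ : SimpleGraph (Fin n)) P
        = ((k : ℝ) - 1) * n / (2 * k * ((n : ℝ) - 1)) := by
  have hm : k * (n / k) = n := Nat.mul_div_cancel' hdvd
  have hm0 : 0 < n / k := Nat.pos_of_ne_zero fun h => by rw [h, mul_zero] at hm; omega
  have hequal (P : Fin k → Finset (Fin n)) (hdisj : ∀ i j, i ≠ j → Disjoint (P i) (P j))
      (hcard : ∀ i, #(P i) = n / k) :=
    cheegerVal_top_of_card_eq hdisj hcard hm hm0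
  obtain ⟨P₀, hdisj₀, hcov₀, hcard₀⟩ := exists_partition_card_eq hm
  have hP₀ : IsVolPartition (⊤ : SimpleGraph (Fin n)) P₀ :=
    ⟨hdisj₀, hcov₀, fun i => gvol_top_pos_iff.mpr ⟨card_pos.mp (hcard₀ i ▸ hm0), hn⟩⟩
  refine ⟨IsLeast.csInf_eq ⟨⟨P₀, hP₀, (hequal P₀ hdisj₀ hcard₀).symm⟩, ?_⟩,
    fun P hdisj _ => hequal P hdisj⟩
  rintro _ ⟨P, hP, rfl⟩
  exact le_cheegerVal_top hP

/-- For `n ≥ 2`, `k ≥ 2` with `k ∣ n`, the `k`-fold Cheeger constant of the complete graph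
`K_n` equals exactly `(k-1)n / (2k(n-1))`, and it is attained by any partition of the
vertices into `k` parts of size `n/k`. -/
theorem cheegerConst_complete {n k : ℕ} (hn : 2 ≤ n) (hk : 2 ≤ k) (hdvd : k ∣ n) :
    cheegerConst n k (⊤ : SimpleGraph (Fin n))
        = ((k : ℝ) - 1) * n / (2 * k * ((n : ℝ) - 1)) ∧
    ∀ P : Fin k → Finset (Fin n),
      (∀ i j, i ≠ j → Disjoint (P i) (P j)) →
      (∀ v, ∃ i, v ∈ P i) →
      (∀ i, (P i).card = n / k) →
      cheegerVal (⊤ : SimpleGraph (Fin n)) P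
        = ((k : ℝ) - 1) * n / (2 * k * ((n : ℝ) - 1)) :=
  cheegerConst_complete_general hn hdvd
end
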